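/- arXiv:2511.02441 — 3 statements merged into one kernel-verified Lean document; each statement's English description precedes it below -/
import Mathlib

section
/- Let N, K be positive integers, let τ_h, τ_v > 0, and for each μ = 1,…,K let J^μ be a symmetric real N×N matrix. Let σ(x) = 1/(1+e^{-x}) be the logistic function. Suppose u : ℝ → ℝ^N and z : ℝ → ℝ^K are differentiable and satisfy, for all t, the deterministic dynamics τ_h·(du_i/dt) = −u_i + Σ_{j=1}^N Σ_{μ=1}^K J^μ_{ij} z_μ(t) σ(u_j(t)) and τ_v·(dz_μ/dt) = −z_μ + (1/2) Σ_{i,j=1}^N J^μ_{ij} σ(u_i(t)) σ(u_j(t)). Set s_i(t) = σ(u_i(t)) and define the Lyapunov function H(t) = −(1/2) Σ_{μ=1}^K Σ_{i,j=1}^N J^μ_{ij} s_i(t) s_j(t) z_μ(t) + (1/2) Σ_{μ=1}^K z_μ(t)^2 + Σ_{i=1}^N ∫_{1/2}^{s_i(t)} σ^{-1}(y) dy, where σ^{-1}(y) = log(y/(1−y)). Then for all t, dH/dt = −τ_v Σ_{μ=1}^K (dz_μ/dt)^2 − τ_h Σ_{i=1}^N σ'(u_i(t)) (du_i/dt)^2,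 and in particular dH/dt ≤ 0. -/
/-! `H` is an energy whose partial derivatives are `∂H/∂z_μ = -τ_v ż_μ` and, because each `J^μ` is
symmetric and the integral term has derivative `σ⁻¹(s_i) = u_i`, `∂H/∂s_i = -τ_h u̇_i`. With
`ṡ_i = σ'(u_i) u̇_i` the chain rule turns `dH/dt` into a negative combination of squares.
-/

open MeasureTheory Finset

theorem hasDerivAt_sum_coupling {ι κ : Type*} [Fintype ι] [Fintype κ]
    {J : κ → Matrix ι ι ℝ} (hJ : ∀ μ, (J μ).IsSymm)
    {s : ℝ → ι → ℝ} {z : ℝ → κ → ℝ} {s' : ι → ℝ} {z' : κ → ℝ} {t : ℝ}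
    (hs : ∀ i, HasDerivAt (fun t => s t i) (s' i) t)
    (hz : ∀ μ, HasDerivAt (fun t => z t μ) (z' μ) t) :
    HasDerivAt (fun t => ∑ μ, ∑ i, ∑ j, J μ i j * s t i * s t j * z t μ)
      (∑ μ, (∑ i, ∑ j, J μ i j * s t i * s t j) * z' μ
        + 2 * ∑ i, (∑ j, ∑ μ, J μ i j * z t μ * s t j) * s' i) t := by
  have hterm : ∀ μ i j, HasDerivAt (fun t => J μ i j * s t i * s t j * z t μ)
      (J μ i j * s' i * s t j * z t μ + J μ i j * s t i * s' j * z t μ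
        + J μ i j * s t i * s t j * z' μ) t := fun μ i j =>
    ((((hs i).const_mul (J μ i j)).fun_mul (hs j)).fun_mul (hz μ)).congr_deriv (by ring)
  refine (HasDerivAt.fun_sum fun μ _ => HasDerivAt.fun_sum fun i _ =>
    HasDerivAt.fun_sum fun j _ => hterm μ i j).congr_deriv ?_
  have hleft : ∑ μ, ∑ i, ∑ j, J μ i j * s' i * s t j * z t μ
      = ∑ i, (∑ j, ∑ μ, J μ i j * z t μ * s t j) * s' i := by
    simp only [sum_mul]
    rw [sum_comm]
    refine sum_congr rfl fun i _ => ?_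
    rw [sum_comm]
    exact sum_congr rfl fun j _ => sum_congr rfl fun μ _ => by ring
  have hright : ∑ μ, ∑ i, ∑ j, J μ i j * s t i * s' j * z t μ
      = ∑ μ, ∑ i, ∑ j, J μ i j * s' i * s t j * z t μ := by
    refine sum_congr rfl fun μ _ => ?_
    rw [sum_comm]
    refine sum_congr rfl fun i _ => sum_congr rfl fun j _ => ?_
    rw [(hJ μ).apply i j]
    ring
  have hcoupling : ∑ μ, ∑ i, ∑ j, J μ i j * s t i * s t j * z' μ
      = ∑ μ, (∑ i, ∑ j, J μ i j * s t i * s t j) * z' μ := by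
    simp only [sum_mul]
  simp only [sum_add_distrib]
  rw [hright, hleft, hcoupling]
  ring

theorem Real.log_sigmoid_div_one_sub_sigmoid (x : ℝ) :
    Real.log (Real.sigmoid x / (1 - Real.sigmoid x)) = x := by
  rw [← Real.sigmoid_neg, ← Real.sigmoid_mul_rexp_neg,
    div_mul_cancel_left₀ (Real.sigmoid_pos x).ne', Real.exp_neg, inv_inv, Real.log_exp]

theorem hasDerivAt_integral_log_div_one_sub {a x : ℝ} (ha : a ∈ Set.Ioo 0 1)
    (hx : x ∈ Set.Ioo 0 1) :
    HasDerivAt (fun b => ∫ y in a..b, Real.log (y / (1 - y))) (Real.log (x / (1 - x))) x := by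
  have hcont : ContinuousOn (fun y => Real.log (y / (1 - y))) (Set.Ioo 0 1) := fun y hy => by
    have hy' : 1 - y ≠ 0 := by linarith [hy.2]
    exact ((continuousAt_id.div (continuousAt_const.sub continuousAt_id) hy').log
      (div_ne_zero hy.1.ne' hy')).continuousWithinAt
  exact intervalIntegral.integral_hasDerivAt_right
    (hcont.mono (Set.ordConnected_Ioo.uIcc_subset ha hx)).intervalIntegrable
    (hcont.stronglyMeasurableAtFilter isOpen_Ioo x hx)
    (hcont.continuousAt (isOpen_Ioo.mem_nhds hx))

theorem hasDerivAt_integral_log_div_one_sub_sigmoid (x : ℝ) :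
    HasDerivAt (fun b => ∫ y in (1/2 : ℝ)..b, Real.log (y / (1 - y))) x (Real.sigmoid x) := by
  have h := hasDerivAt_integral_log_div_one_sub (a := 1/2) ⟨by norm_num, by norm_num⟩
    ⟨Real.sigmoid_pos x, Real.sigmoid_lt_one x⟩
  rwa [Real.log_sigmoid_div_one_sub_sigmoid] at h

theorem hasDerivAt_lyapunov {ι κ : Type*} [Fintype ι] [Fintype κ]
    {J : κ → Matrix ι ι ℝ} (hJ : ∀ μ, (J μ).IsSymm)
    {σ σ' G : ℝ → ℝ} (hσ : ∀ x, HasDerivAt σ (σ' x) x) (hG : ∀ x, HasDerivAt G x (σ x))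
    {τh τv t : ℝ} {u : ℝ → ι → ℝ} {z : ℝ → κ → ℝ} {u' : ι → ℝ} {z' : κ → ℝ}
    (hu : ∀ i, HasDerivAt (fun t => u t i) (u' i) t)
    (hz : ∀ μ, HasDerivAt (fun t => z t μ) (z' μ) t)
    (hdynu : ∀ i, τh * u' i = -(u t i) + ∑ j, ∑ μ, J μ i j * z t μ * σ (u t j))
    (hdynz : ∀ μ, τv * z' μ
      = -(z t μ) + (1/2) * ∑ i, ∑ j, J μ i j * σ (u t i) * σ (u t j)) :
    HasDerivAt (fun t => -(1/2) * ∑ μ, ∑ i, ∑ j, J μ i j * σ (u t i) * σ (u t j) * z t μ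
        + (1/2) * ∑ μ, (z t μ)^2 + ∑ i, G (σ (u t i)))
      (-τv * ∑ μ, z' μ ^ 2 - τh * ∑ i, σ' (u t i) * u' i ^ 2) t := by
  have hs : ∀ i, HasDerivAt (fun t => σ (u t i)) (σ' (u t i) * u' i) t :=
    fun i => (hσ _).comp t (hu i)
  have hsq : HasDerivAt (fun t => ∑ μ, z t μ ^ 2) (∑ μ, 2 * z t μ * z' μ) t :=
    HasDerivAt.fun_sum fun μ _ => ((hz μ).fun_pow 2).congr_deriv (by ring)
  have hpot : HasDerivAt (fun t => ∑ i, G (σ (u t i))) (∑ i, u t i * (σ' (u t i) * u' i)) t :=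
    HasDerivAt.fun_sum fun i _ => (hG (u t i)).comp t (hs i)
  refine ((((hasDerivAt_sum_coupling hJ hs hz).const_mul (-(1/2))).add
    (hsq.const_mul (1/2))).add hpot).congr_deriv ?_
  have hgrad_z : ∀ μ, ∑ i, ∑ j, J μ i j * σ (u t i) * σ (u t j) = 2 * (τv * z' μ + z t μ) :=
    fun μ => by linarith [hdynz μ]
  have hgrad_s : ∀ i, ∑ j, ∑ μ, J μ i j * z t μ * σ (u t j) = τh * u' i + u t i :=
    fun i => by linarith [hdynu i]
  have hz_part : -(1/2) * ∑ μ, 2 * (τv * z' μ + z t μ) * z' μ + (1/2) * ∑ μ, 2 * z t μ * z' μ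
      = -τv * ∑ μ, z' μ ^ 2 := by
    simp only [mul_sum, ← sum_add_distrib]
    exact sum_congr rfl fun μ _ => by ring
  have hs_part : -(1/2) * (2 * ∑ i, (τh * u' i + u t i) * (σ' (u t i) * u' i))
        + ∑ i, u t i * (σ' (u t i) * u' i)
      = -τh * ∑ i, σ' (u t i) * u' i ^ 2 := by
    simp only [mul_sum, ← sum_add_distrib]
    exact sum_congr rfl fun i _ => by ring
  simp only [hgrad_z, hgrad_s]
  linear_combination hz_part + hs_part

theorem stmt0_general
    (N K : ℕ)
    (τh τv : ℝ) (hτh : 0 < τh) (hτv : 0 < τv)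
    (J : Fin K → Matrix (Fin N) (Fin N) ℝ)
    (hJsymm : ∀ μ, (J μ).IsSymm)
    (σ : ℝ → ℝ) (hσ : ∀ x, σ x = 1 / (1 + Real.exp (-x)))
    (u : ℝ → Fin N → ℝ) (z : ℝ → Fin K → ℝ)
    (hu : ∀ i, Differentiable ℝ (fun t => u t i))
    (hz : ∀ μ, Differentiable ℝ (fun t => z t μ))
    (hdynu : ∀ t i, τh * deriv (fun t' => u t' i) t
      = -(u t i) + ∑ j, ∑ μ, J μ i j * z t μ * σ (u t j))
    (hdynz : ∀ t μ, τv * deriv (fun t' => z t' μ) t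
      = -(z t μ) + (1/2) * ∑ i, ∑ j, J μ i j * σ (u t i) * σ (u t j))
    (s : ℝ → Fin N → ℝ) (hs : ∀ t i, s t i = σ (u t i))
    (H : ℝ → ℝ)
    (hH : ∀ t, H t
      = -(1/2) * ∑ μ, ∑ i, ∑ j, J μ i j * s t i * s t j * z t μ
        + (1/2) * ∑ μ, (z t μ)^2
        + ∑ i, ∫ y in (1/2 : ℝ)..(s t i), Real.log (y / (1 - y))) :
    ∀ t, (deriv H t
        = -τv * ∑ μ, (deriv (fun t' => z t' μ) t)^2
          - τh * ∑ i, deriv σ (u t i) * (deriv (fun t' => u t' i) t)^2)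
      ∧ deriv H t ≤ 0 := by
  obtain rfl : σ = Real.sigmoid := funext fun x => by rw [hσ, Real.sigmoid_def, one_div]
  obtain rfl : s = fun t i => Real.sigmoid (u t i) := funext fun t => funext (hs t)
  intro t
  have hderiv : HasDerivAt H (-τv * ∑ μ, (deriv (fun t' => z t' μ) t)^2
      - τh * ∑ i, deriv Real.sigmoid (u t i) * (deriv (fun t' => u t' i) t)^2) t := by
    rw [show H = _ from funext hH, Real.deriv_sigmoid]
    exact hasDerivAt_lyapunov hJsymm Real.hasDerivAt_sigmoid
      hasDerivAt_integral_log_div_one_sub_sigmoid (fun i => (hu i t).hasDerivAt)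
      (fun μ => (hz μ t).hasDerivAt) (hdynu t) (hdynz t)
  rw [hderiv.deriv]
  refine ⟨rfl, ?_⟩
  have hz_sq : 0 ≤ ∑ μ, (deriv (fun t' => z t' μ) t)^2 := sum_nonneg fun μ _ => sq_nonneg _
  have hu_sq : 0 ≤ ∑ i, deriv Real.sigmoid (u t i) * (deriv (fun t' => u t' i) t)^2 := by
    refine sum_nonneg fun i _ => mul_nonneg ?_ (sq_nonneg _)
    rw [Real.deriv_sigmoid]
    exact mul_nonneg (Real.sigmoid_nonneg _) (sub_nonneg.2 (Real.sigmoid_le_one _))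
  linarith [mul_nonneg hτv.le hz_sq, mul_nonneg hτh.le hu_sq]

/-- The function `H` is a Lyapunov function for the deterministic
two-layer (grid-cell / place-cell) dynamics: its time derivative equals
`-τ_v Σ_μ (dz_μ/dt)² - τ_h Σ_i σ'(u_i) (du_i/dt)²`, and in particular is nonpositive. -/
theorem stmt0
    (N K : ℕ) (hN : 0 < N) (hK : 0 < K)
    (τh τv : ℝ) (hτh : 0 < τh) (hτv : 0 < τv)
    (J : Fin K → Matrix (Fin N) (Fin N) ℝ)
    (hJsymm : ∀ μ, (J μ).IsSymm)
    (σ : ℝ → ℝ) (hσ : ∀ x, σ x = 1 / (1 + Real.exp (-x)))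
    (u : ℝ → Fin N → ℝ) (z : ℝ → Fin K → ℝ)
    (hu : ∀ i, Differentiable ℝ (fun t => u t i))
    (hz : ∀ μ, Differentiable ℝ (fun t => z t μ))
    (hdynu : ∀ t i, τh * deriv (fun t' => u t' i) t
      = -(u t i) + ∑ j, ∑ μ, J μ i j * z t μ * σ (u t j))
    (hdynz : ∀ t μ, τv * deriv (fun t' => z t' μ) t
      = -(z t μ) + (1/2) * ∑ i, ∑ j, J μ i j * σ (u t i) * σ (u t j))
    (s : ℝ → Fin N → ℝ) (hs : ∀ t i, s t i = σ (u t i))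
    (H : ℝ → ℝ)
    (hH : ∀ t, H t
      = -(1/2) * ∑ μ, ∑ i, ∑ j, J μ i j * s t i * s t j * z t μ
        + (1/2) * ∑ μ, (z t μ)^2
        + ∑ i, ∫ y in (1/2 : ℝ)..(s t i), Real.log (y / (1 - y))) :
    ∀ t, (deriv H t
        = -τv * ∑ μ, (deriv (fun t' => z t' μ) t)^2
          - τh * ∑ i, deriv σ (u t i) * (deriv (fun t' => u t' i) t)^2)
      ∧ deriv H t ≤ 0 :=
  stmt0_general N K τh τv hτh hτv J hJsymm σ hσ u z hu hz hdynu hdynz s hs H hH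
end

section
/- Let β > 0, let N, K, d be positive integers, and let η^μ_i ∈ ℝ^d for i = 1,…,N and μ = 1,…,K. Then Σ_{s ∈ {0,1}^N} ∫_{ℝ^K} [∏_{μ=1}^K √(β/(2π)) e^{−β z_μ^2/2}] · exp( β √(2/N^3) Σ_{μ=1}^K ( Σ_{i,j=1}^N ⟨η^μ_i, η^μ_j⟩ s_i s_j ) z_μ ) dz = Σ_{s ∈ {0,1}^N} exp( (β/N^3) Σ_{μ=1}^K Σ_{i_1,i_2,i_3,i_4=1}^N ⟨η^μ_{i_1}, η^μ_{i_2}⟩ ⟨η^μ_{i_3}, η^μ_{i_4}⟩ s_{i_1} s_{i_2} s_{i_3} s_{i_4} ). In other words, integrating out the Gaussian place-cell variables z from the bipartite place-cell/grid-cell partition function yields exactly the partition function of a dense four-body (p = 4) Battaglia–Treves network on the grid-cell variables alone. -/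
/-!
For each grid-cell configuration `s` the place-cell fields decouple: the exponent is linear in
`z`, so the integral factorises over `μ` into one-dimensional Gaussian moment generating
functions `E[exp (c z)] = exp (c² / (2β))` for `z ~ 𝒩(0, β⁻¹)`. With `c = β √(2/N³) Σᵢⱼ J_ij sᵢ sⱼ`
the square of the two-body field `Σᵢⱼ J_ij sᵢ sⱼ` is exactly the four-body energy.
-/

open MeasureTheory ProbabilityTheory Real

lemma gaussianPDFReal_inv_toNNReal {β : ℝ} (hβ : 0 < β) (x : ℝ) :
    gaussianPDFReal 0 (β⁻¹).toNNReal x = √(β / (2 * π)) * exp (-β * x ^ 2 / 2) := by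
  rw [gaussianPDFReal, Real.coe_toNNReal _ (inv_pos.2 hβ).le, ← Real.sqrt_inv, sub_zero]
  congr 2 <;> field_simp

lemma integral_gaussian_mul_exp {β : ℝ} (hβ : 0 < β) (c : ℝ) :
    ∫ x, √(β / (2 * π)) * exp (-β * x ^ 2 / 2) * exp (c * x) = exp (c ^ 2 / (2 * β)) := by
  have hv : (β⁻¹).toNNReal ≠ 0 := by simpa using hβ
  have hmgf := congrFun (mgf_id_gaussianReal (μ := 0) (v := (β⁻¹).toNNReal)) c
  rw [mgf, integral_gaussianReal_eq_integral_smul hv] at hmgf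
  simp only [gaussianPDFReal_inv_toNNReal hβ, id, smul_eq_mul,
    Real.coe_toNNReal _ (inv_pos.2 hβ).le] at hmgf
  rw [hmgf]
  congr 1
  field_simp
  ring

lemma integral_prod_mul_exp_sum {ι : Type*} [Fintype ι] (g : ℝ → ℝ) (a : ℝ) (c : ι → ℝ) :
    ∫ z : ι → ℝ, (∏ μ, g (z μ)) * exp (a * ∑ μ, c μ * z μ)
      = ∏ μ, ∫ x, g x * exp (a * c μ * x) := by
  simp_rw [Finset.mul_sum, ← mul_assoc, exp_sum, ← Finset.prod_mul_distrib]
  exact integral_fintype_prod_volume_eq_prod (fun μ x => g x * exp (a * c μ * x))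

lemma sq_sum_sum {ι R : Type*} [Fintype ι] [CommSemiring R] (f : ι → ι → R) :
    (∑ i, ∑ j, f i j) ^ 2 = ∑ i₁, ∑ i₂, ∑ i₃, ∑ i₄, f i₁ i₂ * f i₃ i₄ := by
  simp_rw [sq, Finset.sum_mul, Finset.mul_sum]

theorem stmt1_general (β : ℝ) (hβ : 0 < β) (N K d : ℕ)
    (η : Fin K → Fin N → Fin d → ℝ) :
    ∑ s : Fin N → Bool,
      ∫ z : Fin K → ℝ,
        (∏ μ, Real.sqrt (β / (2 * Real.pi)) * Real.exp (-β * (z μ)^2 / 2)) *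
          Real.exp (β * Real.sqrt (2 / (N : ℝ)^3) *
            ∑ μ, (∑ i, ∑ j, (∑ t, η μ i t * η μ j t) *
              (if s i then (1:ℝ) else 0) * (if s j then (1:ℝ) else 0)) * z μ)
    = ∑ s : Fin N → Bool,
        Real.exp ((β / (N : ℝ)^3) *
          ∑ μ, ∑ i₁, ∑ i₂, ∑ i₃, ∑ i₄,
            (∑ t, η μ i₁ t * η μ i₂ t) * (∑ t, η μ i₃ t * η μ i₄ t) *
              (if s i₁ then (1:ℝ) else 0) * (if s i₂ then (1:ℝ) else 0) *
              (if s i₃ then (1:ℝ) else 0) * (if s i₄ then (1:ℝ) else 0)) := by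
  refine Finset.sum_congr rfl fun s _ => ?_
  rw [integral_prod_mul_exp_sum fun x => √(β / (2 * π)) * exp (-β * x ^ 2 / 2)]
  simp only [integral_gaussian_mul_exp hβ, ← exp_sum]
  rw [Finset.mul_sum]
  refine congrArg exp (Finset.sum_congr rfl fun μ _ => ?_)
  rw [mul_pow, mul_pow, sq_sqrt (by positivity), sq_sum_sum]
  field_simp
  ac_rfl

/-- Integrating out the Gaussian place-cell variables `z` from the
bipartite place-cell/grid-cell partition function (at inhibition strength λ = 1) yields
exactly the partition function of a dense four-body (p = 4) Battaglia–Treves network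
on the Boolean grid-cell variables alone. -/
theorem stmt1 (β : ℝ) (hβ : 0 < β) (N K d : ℕ) (hN : 0 < N) (hK : 0 < K) (hd : 0 < d)
    (η : Fin K → Fin N → Fin d → ℝ) :
    ∑ s : Fin N → Bool,
      ∫ z : Fin K → ℝ,
        (∏ μ, Real.sqrt (β / (2 * Real.pi)) * Real.exp (-β * (z μ)^2 / 2)) *
          Real.exp (β * Real.sqrt (2 / (N : ℝ)^3) *
            ∑ μ, (∑ i, ∑ j, (∑ t, η μ i t * η μ j t) *
              (if s i then (1:ℝ) else 0) * (if s j then (1:ℝ) else 0)) * z μ)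
    = ∑ s : Fin N → Bool,
        Real.exp ((β / (N : ℝ)^3) *
          ∑ μ, ∑ i₁, ∑ i₂, ∑ i₃, ∑ i₄,
            (∑ t, η μ i₁ t * η μ i₂ t) * (∑ t, η μ i₃ t * η μ i₄ t) *
              (if s i₁ then (1:ℝ) else 0) * (if s i₂ then (1:ℝ) else 0) *
              (if s i₃ then (1:ℝ) else 0) * (if s i₄ then (1:ℝ) else 0)) :=
  stmt1_general β hβ N K d η
end

section
/- Let p ≥ 4 be an even integer, let α, β > 0, λ ∈ ℝ, and let x̄, m̄ ∈ ℝ, q̄_1 > 0, q̄_2 > 0, p̄_1 ∈ ℝ, p̄_2 > 0. Define f(θ, z) = β p x̄^{p−1} cos θ − β p (λ−1) m̄^{p−1} + (p/2)( p̄_1 q̄_1^{p/2−1} − p̄_2 q̄_2^{p/2−1} ) + √( p p̄_2 q̄_2^{p/2−1} ) z, and define the replica-symmetric free energy A( p̄_2 ) = (1−p) β x̄^p − β(λ−1)(1−p) m̄^p + α β^2 ( q̄_1^p − q̄_2^p ) − (p/2)( p̄_1 q̄_1^{p/2} − p̄_2 q̄_2^{p/2} ) + (1/π) ∫_0^π ∫_ℝ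 log( 1 + e^{f(θ,z)} ) dγ(z) dθ, viewed as a function of p̄_2 with all other variables fixed. Then A is differentiable in p̄_2 with ∂A/∂p̄_2 = (p/2) q̄_2^{p/2−1} ( q̄_2 − H ), where H = (1/π) ∫_0^π ∫_ℝ σ( f(θ,z) )^2 dγ(z) dθ and σ(x) = 1/(1+e^{-x}). In particular, since q̄_2 > 0, the stationarity condition ∂A/∂p̄_2 = 0 holds if and only if q̄_2 = (1/π) ∫_0^π ∫_ℝ σ( f(θ,z) )^2 dγ(z) dθ. -/
/-!
Write `f = a(θ) - v/2 + √v z` with `v = s p̄₂` and `s = p q̄₂^(p/2-1)`, so that the `θ`-integrand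
of `A` is `G(a(θ), v) = 𝔼[softplus (a - v/2 + √v Z)]`, `softplus x = log (1 + eˣ)`.
Differentiating under the Gaussian integral gives `∂ᵥG = 𝔼[σ(⋯) (-1/2 + Z/(2√v))]`, and Stein's
lemma `𝔼[Z g(Z)] = 𝔼[g'(Z)]` turns the `Z`-term into `½ 𝔼[σ'(⋯)] = ½ 𝔼[σ - σ²]`; hence
`∂ᵥG = -½ 𝔼[σ²]`, which is bounded uniformly in `θ`, so it may be taken under the `θ`-integral.
Together with the linear term `(p/2) q̄₂^(p/2) p̄₂` this yields `(p/2) q̄₂^(p/2-1) (q̄₂ - H)`.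
-/

open MeasureTheory ProbabilityTheory Filter Real
open scoped NNReal

noncomputable def softplus (x : ℝ) : ℝ := log (1 + exp x)

lemma hasDerivAt_softplus (x : ℝ) : HasDerivAt softplus (sigmoid x) x := by
  refine (((hasDerivAt_exp x).const_add 1).log (by positivity)).congr_deriv ?_
  rw [sigmoid_def, exp_neg]
  field_simp
  ring

lemma abs_sigmoid_le_one (x : ℝ) : |sigmoid x| ≤ 1 :=
  abs_le.2 ⟨by linarith [sigmoid_nonneg x], sigmoid_le_one x⟩

lemma lipschitzWith_softplus : LipschitzWith 1 softplus :=
  lipschitzWith_of_nnnorm_deriv_le (fun x => (hasDerivAt_softplus x).differentiableAt)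
    fun x => by
      rw [(hasDerivAt_softplus x).deriv, ← NNReal.coe_le_coe, coe_nnnorm]
      exact abs_sigmoid_le_one x

lemma LipschitzWith.integrable_comp {Ω : Type*} [MeasurableSpace Ω] {ν : Measure Ω}
    [IsFiniteMeasure ν] {K : ℝ≥0} {φ : ℝ → ℝ} (hφ : LipschitzWith K φ) {g : Ω → ℝ}
    (hg : Integrable g ν) : Integrable (fun ω => φ (g ω)) ν := by
  refine ((integrable_const |φ 0|).add (hg.norm.const_mul K)).mono'
    (hφ.continuous.comp_aestronglyMeasurable hg.1) (ae_of_all _ fun ω => ?_)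
  have := hφ.dist_le_mul (g ω) 0
  rw [Real.dist_eq, Real.dist_eq, sub_zero] at this
  simp only [Pi.add_apply, Real.norm_eq_abs]
  linarith [abs_sub_abs_le_abs_sub (φ (g ω)) (φ 0)]

lemma LipschitzWith.integral_comp_add {Ω : Type*} [MeasurableSpace Ω] {ν : Measure Ω}
    [IsProbabilityMeasure ν] {K : ℝ≥0} {φ : ℝ → ℝ} (hφ : LipschitzWith K φ) {g : Ω → ℝ}
    (hg : Integrable g ν) : LipschitzWith K fun m => ∫ ω, φ (m + g ω) ∂ν := by
  have hint (m : ℝ) : Integrable (fun ω => φ (m + g ω)) ν :=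
    hφ.integrable_comp ((integrable_const m).add hg)
  refine LipschitzWith.of_dist_le_mul fun m m' => ?_
  rw [dist_eq_norm, ← integral_sub (hint m) (hint m')]
  refine (norm_integral_le_of_norm_le_const (C := K * dist m m') (ae_of_all _ fun ω => ?_)).trans
    (by simp)
  rw [← dist_eq_norm, ← dist_add_right m m' (g ω)]
  exact hφ.dist_le_mul _ _

namespace ProbabilityTheory

variable {μ : ℝ} {v : ℝ≥0}

lemma hasDerivAt_gaussianPDFReal (μ : ℝ) (v : ℝ≥0) (x : ℝ) :
    HasDerivAt (gaussianPDFReal μ v) (-((x - μ) / v) * gaussianPDFReal μ v x) x := by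
  have h := (((hasDerivAt_id' x).sub_const μ).pow 2).neg.div_const (2 * (v : ℝ))
  simp only [Pi.neg_apply, Pi.pow_apply] at h
  refine (h.exp.const_mul (√(2 * π * v))⁻¹).congr_deriv ?_
  rw [gaussianPDFReal_def]
  field_simp
  ring

lemma integrable_gaussianReal_iff (hv : v ≠ 0) {f : ℝ → ℝ} :
    Integrable f (gaussianReal μ v) ↔ Integrable fun x => gaussianPDFReal μ v x * f x := by
  rw [gaussianReal_of_var_ne_zero _ hv, integrable_withDensity_iff_integrable_smul'
    (measurable_gaussianPDF μ v) (ae_of_all _ fun _ => gaussianPDF_lt_top)]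
  simp [toReal_gaussianPDF]

lemma integrable_id_gaussianReal : Integrable id (gaussianReal μ v) :=
  (memLp_id_gaussianReal 1).integrable le_rfl

/-- Stein's lemma (Gaussian integration by parts). -/
theorem integral_sub_mean_mul_gaussianReal {g g' : ℝ → ℝ}
    (hg : ∀ x, HasDerivAt g (g' x) x) (hg_int : Integrable g (gaussianReal μ v))
    (hxg_int : Integrable (fun x => (x - μ) * g x) (gaussianReal μ v))
    (hg'_int : Integrable g' (gaussianReal μ v)) :
    ∫ x, (x - μ) * g x ∂gaussianReal μ v = v * ∫ x, g' x ∂gaussianReal μ v := by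
  rcases eq_or_ne v 0 with rfl | hv
  · simp
  rw [integrable_gaussianReal_iff hv] at hg_int hxg_int hg'_int
  have hv' : (v : ℝ) ≠ 0 := NNReal.coe_ne_zero.2 hv
  have parts := integral_mul_deriv_eq_deriv_mul_of_integrable (fun x _ => hg x)
    (fun x _ => hasDerivAt_gaussianPDFReal μ v x)
    ((hxg_int.const_mul (-(v : ℝ)⁻¹)).congr
      (ae_of_all _ fun x => by simp only [Pi.mul_apply]; ring))
    (hg'_int.congr (ae_of_all _ fun x => by simp only [Pi.mul_apply]; ring))
    (hg_int.congr (ae_of_all _ fun x => by simp only [Pi.mul_apply]; ring))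
  simp only [integral_gaussianReal_eq_integral_smul hv, smul_eq_mul]
  calc ∫ x, gaussianPDFReal μ v x * ((x - μ) * g x)
      = -v * ∫ x, g x * (-((x - μ) / v) * gaussianPDFReal μ v x) := by
        rw [← integral_const_mul]
        congr 1 with x
        field_simp
    _ = v * ∫ x, gaussianPDFReal μ v x * g' x := by
        rw [parts]
        simp only [mul_comm (g' _)]
        ring

section HeatEquation

variable {φ ψ ψ' : ℝ → ℝ} {C D : ℝ≥0}

lemma integral_mul_comp_add_mul_gaussianReal (hψ : ∀ x, HasDerivAt ψ (ψ' x) x)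
    (hψC : ∀ x, |ψ x| ≤ C) (hψ'D : ∀ x, |ψ' x| ≤ D) (a c : ℝ) :
    ∫ z, z * ψ (a + c * z) ∂gaussianReal 0 1 = c * ∫ z, ψ' (a + c * z) ∂gaussianReal 0 1 := by
  have hψ_cont : Continuous ψ := continuous_iff_continuousAt.2 fun x => (hψ x).continuousAt
  have hψ'_meas : Measurable ψ' := by
    rw [show ψ' = deriv ψ from funext fun x => ((hψ x).deriv).symm]
    exact measurable_deriv ψ
  have hg : ∀ z, HasDerivAt (fun z => ψ (a + c * z)) (ψ' (a + c * z) * c) z := fun z =>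
    (hψ _).comp z (((hasDerivAt_id z).const_mul c).const_add a |>.congr_deriv (mul_one c))
  have hg_int : Integrable (fun z => ψ (a + c * z)) (gaussianReal 0 1) :=
    .of_bound (by fun_prop) C (ae_of_all _ fun z => hψC _)
  have hg'_int : Integrable (fun z => ψ' (a + c * z) * c) (gaussianReal 0 1) :=
    .of_bound (by fun_prop : Measurable fun z => ψ' (a + c * z) * c).aestronglyMeasurable
      (D * |c|) (ae_of_all _ fun z => by rw [Real.norm_eq_abs, abs_mul]; gcongr; exact hψ'D _)
  have hzg_int : Integrable (fun z => (z - 0) * ψ (a + c * z)) (gaussianReal 0 1) := by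
    simpa [mul_comm] using integrable_id_gaussianReal.bdd_mul hg_int.1
      (ae_of_all _ fun z => (hψC (a + c * z)).trans' (Real.norm_eq_abs _).le)
  have stein := integral_sub_mean_mul_gaussianReal hg hg_int hzg_int hg'_int
  simp only [sub_zero, NNReal.coe_one, one_mul, integral_mul_const] at stein
  rw [stein, mul_comm]

lemma hasDerivAt_integral_comp_add_sqrt_mul_gaussianReal (hφ : ∀ x, HasDerivAt φ (ψ x) x)
    (hψ : ∀ x, HasDerivAt ψ (ψ' x) x) (hψC : ∀ x, |ψ x| ≤ C) (hψ'D : ∀ x, |ψ' x| ≤ D)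
    (m b : ℝ) {v : ℝ} (hv : 0 < v) :
    HasDerivAt (fun w => ∫ z, φ (m + b * w + √w * z) ∂gaussianReal 0 1)
      (b * ∫ z, ψ (m + b * v + √v * z) ∂gaussianReal 0 1
        + (∫ z, ψ' (m + b * v + √v * z) ∂gaussianReal 0 1) / 2) v := by
  have hφ_lip : LipschitzWith C φ := lipschitzWith_of_nnnorm_deriv_le
    (fun x => (hφ x).differentiableAt) fun x => by
      rw [(hφ x).deriv, ← NNReal.coe_le_coe, coe_nnnorm]; exact hψC x
  have hφ_cont : Continuous φ := hφ_lip.continuous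
  have hψ_cont : Continuous ψ := continuous_iff_continuousAt.2 fun x => (hψ x).continuousAt
  have hinner (z : ℝ) {w : ℝ} (hw : 0 < w) :
      HasDerivAt (fun w => m + b * w + √w * z) (b + z / (2 * √w)) w := by
    refine ((((hasDerivAt_id w).const_mul b).const_add m).add
      ((hasDerivAt_sqrt hw.ne').mul_const z)).congr_deriv ?_
    field_simp
  have hbound (z : ℝ) {w : ℝ} (hw : v / 2 < w) :
      ‖ψ (m + b * w + √w * z) * (b + z / (2 * √w))‖ ≤ C * (|b| + 1 / (2 * √(v / 2)) * |z|) := by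
    have hw0 : 0 < w := (half_pos hv).trans hw
    rw [Real.norm_eq_abs, abs_mul]
    gcongr
    · exact hψC _
    refine (abs_add_le _ _).trans ?_
    gcongr
    rw [abs_div, abs_of_pos (by positivity : 0 < 2 * √w), div_eq_mul_one_div, mul_comm]
    gcongr
  obtain ⟨-, hderiv⟩ := hasDerivAt_integral_of_dominated_loc_of_deriv_le
    (F := fun w z => φ (m + b * w + √w * z))
    (F' := fun w z => ψ (m + b * w + √w * z) * (b + z / (2 * √w)))
    (Ioi_mem_nhds (half_lt_self hv))
    (Eventually.of_forall fun w => by fun_prop)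
    (hφ_lip.integrable_comp
      ((integrable_const _).add (integrable_id_gaussianReal.const_mul _)))
    (by fun_prop)
    (ae_of_all _ fun z w hw => hbound z hw)
    (((integrable_const _).add (integrable_id_gaussianReal.abs.const_mul _)).const_mul _)
    (ae_of_all _ fun z w hw => (hφ _).comp w (hinner z (by linarith [hw.out])))
  refine hderiv.congr_deriv ?_
  have hψ_int : Integrable (fun z => ψ (m + b * v + √v * z)) (gaussianReal 0 1) :=
    .of_bound (by fun_prop) C (ae_of_all _ fun z => hψC _)
  have hzψ_int : Integrable (fun z => z * ψ (m + b * v + √v * z)) (gaussianReal 0 1) := by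
    simpa [mul_comm] using integrable_id_gaussianReal.bdd_mul hψ_int.1
      (ae_of_all _ fun z => (hψC _).trans' (Real.norm_eq_abs _).le)
  have hsqrt : √v ≠ 0 := (sqrt_pos.2 hv).ne'
  calc ∫ z, ψ (m + b * v + √v * z) * (b + z / (2 * √v)) ∂gaussianReal 0 1
      = ∫ z, (b * ψ (m + b * v + √v * z) + 1 / (2 * √v) * (z * ψ (m + b * v + √v * z)))
          ∂gaussianReal 0 1 := by
        congr 1 with z
        ring
    _ = b * ∫ z, ψ (m + b * v + √v * z) ∂gaussianReal 0 1
          + 1 / (2 * √v) * ∫ z, z * ψ (m + b * v + √v * z) ∂gaussianReal 0 1 := by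
        rw [integral_add (hψ_int.const_mul b) (hzψ_int.const_mul _), integral_const_mul,
          integral_const_mul]
    _ = _ := by
        rw [integral_mul_comp_add_mul_gaussianReal hψ hψC hψ'D]
        field_simp

end HeatEquation

end ProbabilityTheory

noncomputable def gaussianSoftplus (m v : ℝ) : ℝ :=
  ∫ z, softplus (m - v / 2 + √v * z) ∂gaussianReal 0 1

lemma hasDerivAt_gaussianSoftplus (m : ℝ) {v : ℝ} (hv : 0 < v) :
    HasDerivAt (gaussianSoftplus m)
      (-(∫ z, sigmoid (m - v / 2 + √v * z) ^ 2 ∂gaussianReal 0 1) / 2) v := by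
  have hσ'_le (x : ℝ) : |sigmoid x * (1 - sigmoid x)| ≤ (1 : ℝ≥0) := by
    rw [NNReal.coe_one, abs_le]
    constructor <;> nlinarith [sigmoid_nonneg x, sigmoid_le_one x]
  have h := hasDerivAt_integral_comp_add_sqrt_mul_gaussianReal (C := 1) hasDerivAt_softplus
    hasDerivAt_sigmoid (by simpa using abs_sigmoid_le_one) hσ'_le m (-1 / 2) hv
  have hrw (w z : ℝ) : m + -1 / 2 * w + √w * z = m - w / 2 + √w * z := by ring
  simp only [hrw] at h
  refine h.congr_deriv ?_
  have hσ_int : Integrable (fun z => sigmoid (m - v / 2 + √v * z)) (gaussianReal 0 1) :=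
    .of_bound (by fun_prop) 1 (ae_of_all _ fun z => abs_sigmoid_le_one _)
  have hσ2_int : Integrable (fun z => sigmoid (m - v / 2 + √v * z) ^ 2) (gaussianReal 0 1) :=
    .of_bound (by fun_prop) 1 (ae_of_all _ fun z => by
      rw [Real.norm_eq_abs, abs_pow]
      exact pow_le_one₀ (abs_nonneg _) (abs_sigmoid_le_one _))
  simp only [mul_one_sub, ← sq]
  rw [integral_sub hσ_int hσ2_int]
  ring

lemma lipschitzWith_gaussianSoftplus (v : ℝ) : LipschitzWith 1 fun m => gaussianSoftplus m v := by
  have h := lipschitzWith_softplus.integral_comp_add (ν := gaussianReal 0 1)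
    (g := fun z => -(v / 2) + √v * z)
    ((integrable_const _).add (integrable_id_gaussianReal.const_mul _))
  simpa only [gaussianSoftplus, ← add_assoc, ← sub_eq_add_neg] using h

lemma hasDerivAt_intervalIntegral_gaussianSoftplus {a : ℝ → ℝ} (ha : Continuous a)
    (θ₀ θ₁ : ℝ) {v : ℝ} (hv : 0 < v) :
    HasDerivAt (fun w => ∫ θ in θ₀..θ₁, gaussianSoftplus (a θ) w)
      (-(∫ θ in θ₀..θ₁, ∫ z, sigmoid (a θ - v / 2 + √v * z) ^ 2 ∂gaussianReal 0 1) / 2) v := by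
  have hF_cont (w : ℝ) : Continuous fun θ => gaussianSoftplus (a θ) w :=
    (lipschitzWith_gaussianSoftplus w).continuous.comp ha
  have hF'_meas : StronglyMeasurable (fun θ =>
      ∫ z, sigmoid (a θ - v / 2 + √v * z) ^ 2 ∂gaussianReal 0 1) :=
    StronglyMeasurable.integral_prod_right (f := fun θ z => sigmoid (a θ - v / 2 + √v * z) ^ 2)
      (Continuous.stronglyMeasurable (by fun_prop))
  have hF'_le (w : ℝ) (θ : ℝ) :
      ‖-(∫ z, sigmoid (a θ - w / 2 + √w * z) ^ 2 ∂gaussianReal 0 1) / 2‖ ≤ 1 / 2 := by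
    rw [norm_div, norm_neg, Real.norm_two]
    gcongr
    refine (norm_integral_le_of_norm_le_const (C := 1) (ae_of_all _ fun z => ?_)).trans (by simp)
    rw [Real.norm_eq_abs, abs_pow]
    exact pow_le_one₀ (abs_nonneg _) (abs_sigmoid_le_one _)
  obtain ⟨-, h⟩ := intervalIntegral.hasDerivAt_integral_of_dominated_loc_of_deriv_le (μ := volume)
    (F := fun w θ => gaussianSoftplus (a θ) w)
    (F' := fun w θ => -(∫ z, sigmoid (a θ - w / 2 + √w * z) ^ 2 ∂gaussianReal 0 1) / 2)
    (bound := fun _ => 1 / 2) (Ioi_mem_nhds hv)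
    (Eventually.of_forall fun w => (hF_cont w).aestronglyMeasurable)
    ((hF_cont v).intervalIntegrable θ₀ θ₁)
    (hF'_meas.measurable.neg.div_const 2).aestronglyMeasurable
    (ae_of_all _ fun θ _ w _ => hF'_le w θ)
    intervalIntegrable_const
    (ae_of_all _ fun θ _ w hw => hasDerivAt_gaussianSoftplus (a θ) hw)
  rwa [intervalIntegral.integral_div, intervalIntegral.integral_neg] at h

theorem stmt16_general (p : ℕ) (hp4 : 4 ≤ p)
    (α β lam : ℝ)
    (xb mb q1 q2 p1 : ℝ) (hq2 : 0 < q2)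
    (p2 : ℝ) (hp2 : 0 < p2)
    (f : ℝ → ℝ → ℝ → ℝ)
    (hf : ∀ P2 θ z, f P2 θ z
      = β * p * xb ^ (p - 1) * Real.cos θ - β * p * (lam - 1) * mb ^ (p - 1)
        + ((p : ℝ) / 2) * (p1 * q1 ^ (p / 2 - 1) - P2 * q2 ^ (p / 2 - 1))
        + Real.sqrt ((p : ℝ) * P2 * q2 ^ (p / 2 - 1)) * z)
    (A : ℝ → ℝ)
    (hA : ∀ P2, A P2
      = (1 - (p : ℝ)) * β * xb ^ p - β * (lam - 1) * (1 - (p : ℝ)) * mb ^ p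
        + α * β ^ 2 * (q1 ^ p - q2 ^ p)
        - ((p : ℝ) / 2) * (p1 * q1 ^ (p / 2) - P2 * q2 ^ (p / 2))
        + (1 / Real.pi) * ∫ θ in (0:ℝ)..Real.pi,
            ∫ z : ℝ, Real.log (1 + Real.exp (f P2 θ z)) ∂(gaussianReal 0 1))
    (H : ℝ)
    (hH : H = (1 / Real.pi) * ∫ θ in (0:ℝ)..Real.pi,
        ∫ z : ℝ, (1 / (1 + Real.exp (-(f p2 θ z)))) ^ 2 ∂(gaussianReal 0 1)) :
    HasDerivAt A (((p : ℝ) / 2) * q2 ^ (p / 2 - 1) * (q2 - H)) p2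
      ∧ (deriv A p2 = 0 ↔ q2 = H) := by
  have hp : (0 : ℝ) < p := by exact_mod_cast (show 0 < p by omega)
  set s : ℝ := p * q2 ^ (p / 2 - 1)
  set a : ℝ → ℝ := fun θ => β * p * xb ^ (p - 1) * cos θ - β * p * (lam - 1) * mb ^ (p - 1)
    + p / 2 * (p1 * q1 ^ (p / 2 - 1))
  have hf' (P2 θ z : ℝ) : f P2 θ z = a θ - s * P2 / 2 + √(s * P2) * z := by
    rw [hf, show (p : ℝ) * P2 * q2 ^ (p / 2 - 1) = s * P2 by ring]
    ring
  have hA' (P2 θ : ℝ) : ∫ z, log (1 + exp (f P2 θ z)) ∂gaussianReal 0 1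
      = gaussianSoftplus (a θ) (s * P2) := by
    simp only [hf']
    rfl
  have hH' : H = 1 / π * ∫ θ in 0..π, ∫ z, sigmoid (a θ - s * p2 / 2 + √(s * p2) * z) ^ 2
      ∂gaussianReal 0 1 := by
    simp only [hH, hf', one_div, sigmoid_def]
  have hJ := (hasDerivAt_intervalIntegral_gaussianSoftplus (a := a) (by fun_prop) 0 π
    (mul_pos (by positivity) hp2)).comp p2 ((hasDerivAt_id p2).const_mul s)
  have hL := (((hasDerivAt_id p2).mul_const (q2 ^ (p / 2))).const_sub (p1 * q1 ^ (p / 2))).const_mul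
    ((p : ℝ) / 2)
  have hd : HasDerivAt A (((p : ℝ) / 2) * q2 ^ (p / 2 - 1) * (q2 - H)) p2 := by
    rw [show A = _ from funext hA]
    simp only [hA']
    refine ((hL.const_sub _).add (hJ.const_mul _)).congr_deriv ?_
    rw [hH', show q2 ^ (p / 2) = q2 ^ (p / 2 - 1) * q2 by rw [← pow_succ]; congr 1; omega]
    field_simp
    ring
  refine ⟨hd, ?_⟩
  rw [hd.deriv, mul_eq_zero, sub_eq_zero, or_iff_right (by positivity)]

/-- The replica-symmetric free energy `A`, viewed as a function of
the auxiliary place-cell overlap `p̄₂`, is differentiable at `p̄₂ > 0` with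
`∂A/∂p̄₂ = (p/2) q̄₂^{p/2-1} (q̄₂ - H)` where
`H = (1/π) ∫_0^π ∫ σ(f(θ,z))² dγ(z) dθ`; in particular, since `q̄₂ > 0`, the
stationarity condition `∂A/∂p̄₂ = 0` holds iff `q̄₂ = H`. -/
theorem stmt16 (p : ℕ) (hpeven : Even p) (hp4 : 4 ≤ p)
    (α β lam : ℝ) (hα : 0 < α) (hβ : 0 < β)
    (xb mb q1 q2 p1 : ℝ) (hq1 : 0 < q1) (hq2 : 0 < q2)
    (p2 : ℝ) (hp2 : 0 < p2)
    (f : ℝ → ℝ → ℝ → ℝ)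
    (hf : ∀ P2 θ z, f P2 θ z
      = β * p * xb ^ (p - 1) * Real.cos θ - β * p * (lam - 1) * mb ^ (p - 1)
        + ((p : ℝ) / 2) * (p1 * q1 ^ (p / 2 - 1) - P2 * q2 ^ (p / 2 - 1))
        + Real.sqrt ((p : ℝ) * P2 * q2 ^ (p / 2 - 1)) * z)
    (A : ℝ → ℝ)
    (hA : ∀ P2, A P2
      = (1 - (p : ℝ)) * β * xb ^ p - β * (lam - 1) * (1 - (p : ℝ)) * mb ^ p
        + α * β ^ 2 * (q1 ^ p - q2 ^ p)
        - ((p : ℝ) / 2) * (p1 * q1 ^ (p / 2) - P2 * q2 ^ (p / 2))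
        + (1 / Real.pi) * ∫ θ in (0:ℝ)..Real.pi,
            ∫ z : ℝ, Real.log (1 + Real.exp (f P2 θ z)) ∂(gaussianReal 0 1))
    (H : ℝ)
    (hH : H = (1 / Real.pi) * ∫ θ in (0:ℝ)..Real.pi,
        ∫ z : ℝ, (1 / (1 + Real.exp (-(f p2 θ z)))) ^ 2 ∂(gaussianReal 0 1)) :
    HasDerivAt A (((p : ℝ) / 2) * q2 ^ (p / 2 - 1) * (q2 - H)) p2
      ∧ (deriv A p2 = 0 ↔ q2 = H) :=
  stmt16_general p hp4 α β lam xb mb q1 q2 p1 hq2 p2 hp2 f hf A hA H hH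
end
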